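/- arXiv:1810.08871 — 2 statements merged into one kernel-verified Lean document; each statement's English description precedes it below -/
import Mathlib

section
/- For a pure dual quaternion g = g₀ + ε g₀' (with g₀, g₀' pure quaternions), the dual quaternion exp(g) = exp(g₀) + ε g₀' exp(g₀) is a unit dual quaternion, i.e., exp(g) · exp(g)* = 1. -/
open Classical in

noncomputable def qexp (g : Quaternion ℝ) : Quaternion ℝ :=
  if g = 0 then 1
  else ((Real.cos ‖g‖ : ℝ) : Quaternion ℝ) + (Real.sin ‖g‖ / ‖g‖) • g

noncomputable def mkDQ (h h' : Quaternion ℝ) : DualNumber (Quaternion ℝ) :=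
  TrivSqZeroExt.inl h + TrivSqZeroExt.inr h'

noncomputable def dconj (d : DualNumber (Quaternion ℝ)) : DualNumber (Quaternion ℝ) :=
  mkDQ (star (TrivSqZeroExt.fst d)) (star (TrivSqZeroExt.snd d))

noncomputable def dqexp (g g' : Quaternion ℝ) : DualNumber (Quaternion ℝ) :=
  mkDQ (qexp g) (g' * qexp g)

lemma star_pure {g : Quaternion ℝ} (hg : g.re = 0) : star g = -g := by
  ext <;> simp [Quaternion.re_star, hg]

lemma pure_mul_self {g : Quaternion ℝ} (hg : g.re = 0) :
    g * g = -((‖g‖ ^ 2 : ℝ) : Quaternion ℝ) := by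
  have h1 : g * star g = ((Quaternion.normSq g : ℝ) : Quaternion ℝ) := by
    simp [Quaternion.self_mul_star]
  rw [star_pure hg, mul_neg, neg_eq_iff_eq_neg] at h1
  rw [h1]
  norm_cast
  rw [Quaternion.normSq_eq_norm_mul_self]
  ring

lemma qexp_mul_star {g : Quaternion ℝ} (hg : g.re = 0) :
    qexp g * star (qexp g) = 1 := by
  unfold qexp
  by_cases h : g = 0
  · simp [h]
  · simp only [h, if_false]
    set c : ℝ := Real.cos ‖g‖ with hc
    set s : ℝ := Real.sin ‖g‖ / ‖g‖ with hs
    have hq : star (((c : ℝ) : Quaternion ℝ) + s • g) = ((c : ℝ) : Quaternion ℝ) - s • g := by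
      rw [star_add, Quaternion.star_coe, ← Quaternion.coe_mul_eq_smul, star_mul,
        Quaternion.star_coe, star_pure hg, neg_mul, Quaternion.mul_coe_eq_smul,
        ← sub_eq_add_neg, Quaternion.coe_mul_eq_smul]
    rw [hq]
    have e1 : (((c : ℝ) : Quaternion ℝ) + s • g) * (((c : ℝ) : Quaternion ℝ) - s • g)
        = ((c : ℝ) : Quaternion ℝ) * ((c : ℝ) : Quaternion ℝ) - (s * s) • (g * g) := by
      have hcomm : ((c : ℝ) : Quaternion ℝ) * g = g * ((c : ℝ) : Quaternion ℝ) := by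
        rw [Quaternion.coe_mul_eq_smul, Quaternion.mul_coe_eq_smul]
      rw [add_mul, mul_sub, mul_sub, mul_smul_comm, smul_mul_assoc, hcomm,
        smul_mul_smul_comm, sub_add_sub_cancel]
    rw [e1, pure_mul_self hg, smul_neg, sub_neg_eq_add, ← Quaternion.coe_mul,
      ← Quaternion.coe_mul_eq_smul, ← Quaternion.coe_mul, ← Quaternion.coe_add]
    have hng : ‖g‖ ≠ 0 := norm_ne_zero_iff.mpr h
    have hkey : c * c + s * s * ‖g‖ ^ 2 = 1 := by
      rw [hc, hs]
      field_simp
      nlinarith [Real.sin_sq_add_cos_sq ‖g‖]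
    rw [hkey]
    norm_cast

theorem dqexp_pure_is_unit (g g' : Quaternion ℝ) (hg : g.re = 0) (hg' : g'.re = 0) :
    dqexp g g' * dconj (dqexp g g') = 1 := by
  unfold dqexp dconj mkDQ
  simp only [TrivSqZeroExt.fst_add, TrivSqZeroExt.snd_add, TrivSqZeroExt.fst_inl,
    TrivSqZeroExt.snd_inl, TrivSqZeroExt.fst_inr, TrivSqZeroExt.snd_inr, zero_add, add_zero]
  rw [add_mul, mul_add, mul_add, TrivSqZeroExt.inl_mul_inl, TrivSqZeroExt.inl_mul_inr,
    TrivSqZeroExt.inr_mul_inl, TrivSqZeroExt.inr_mul_inr, qexp_mul_star hg]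
  simp only [smul_eq_mul, MulOpposite.smul_eq_mul_unop, MulOpposite.unop_op]
  have key : qexp g * star (g' * qexp g) + g' * qexp g * star (qexp g) = 0 := by
    rw [star_mul, ← mul_assoc, qexp_mul_star hg, one_mul, star_pure hg',
      mul_assoc, qexp_mul_star hg, mul_one]
    abel
  rw [add_zero, add_assoc, ← TrivSqZeroExt.inr_add, key]
  simp
end

section
/- Let φ ∈ [0, 2π), n = (n_x, n_y, n_z) a unit vector, Θ = sin(φ/2)/(φ/2) for φ ≠ 0 (Θ = 1 for φ = 0), Γ = cos(φ/2) − Θ, and let Q be the 4×3 matrix with first row (−sin(φ/2)n_x, −sin(φ/2)n_y, −sin(φ/2)n_z) and lower 3×3 block Γ nnᵀ + Θ I₃. Then det(QᵀQ) = Θ⁴, which is nonzero; hence Q has full column rank 3. -/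
open Matrix in
theorem Q_full_column_rank (φ nx ny nz : ℝ)
    (hφ : φ ∈ Set.Ico (0 : ℝ) (2 * Real.pi))
    (hn : nx ^ 2 + ny ^ 2 + nz ^ 2 = 1) :
    let Θ : ℝ := if φ = 0 then 1 else Real.sin (φ / 2) / (φ / 2)
    let Γ : ℝ := Real.cos (φ / 2) - Θ
    let Q : Matrix (Fin 4) (Fin 3) ℝ :=
      !![-(Real.sin (φ / 2) * nx), -(Real.sin (φ / 2) * ny), -(Real.sin (φ / 2) * nz);
         Γ * nx ^ 2 + Θ, Γ * nx * ny, Γ * nx * nz;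
         Γ * ny * nx, Γ * ny ^ 2 + Θ, Γ * ny * nz;
         Γ * nz * nx, Γ * nz * ny, Γ * nz ^ 2 + Θ]
    (Qᵀ * Q).det = Θ ^ 4 ∧ Θ ^ 4 ≠ 0 ∧ Q.rank = 3 := by
  intro Θ Γ Q
  have hΘpos : 0 < Θ := by
    show (0:ℝ) < if φ = 0 then 1 else Real.sin (φ / 2) / (φ / 2)
    split_ifs with h
    · norm_num
    · have h0 : 0 < φ / 2 := by
        rcases hφ with ⟨h1, _⟩
        have : 0 < φ := lt_of_le_of_ne h1 (Ne.symm h)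
        linarith
      have h1 : φ / 2 < Real.pi := by
        rcases hφ with ⟨_, h2⟩
        linarith
      exact div_pos (Real.sin_pos_of_pos_of_lt_pi h0 h1) h0
  have hΘ4 : Θ ^ 4 ≠ 0 := by positivity
  have hGT : Γ + Θ = Real.cos (φ / 2) := by simp [Γ]
  have key : Real.sin (φ / 2) ^ 2 + Γ ^ 2 + 2 * Γ * Θ + Θ ^ 2 = 1 := by
    have := Real.sin_sq_add_cos_sq (φ / 2)
    nlinarith [this, hGT]
  have hdet : (Qᵀ * Q).det = Θ ^ 4 := by
    simp only [Q]
    clear_value Γ Θ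
    clear hΘpos hΘ4 hGT hφ
    generalize Real.sin (φ / 2) = s at key ⊢
    rw [Matrix.det_fin_three]
    simp [Matrix.mul_apply, Fin.sum_univ_succ]
    linear_combination Θ ^ 4 * key +
      Θ ^ 4 * (s ^ 2 + 2 * Γ * Θ + Γ ^ 2 * ((nx ^ 2 + ny ^ 2 + nz ^ 2) + 1)) * hn
  refine ⟨hdet, hΘ4, ?_⟩
  have hrank : (Qᵀ * Q).rank = Q.rank := Matrix.rank_transpose_mul_self Q
  have hunit : IsUnit (Qᵀ * Q) := by
    rw [Matrix.isUnit_iff_isUnit_det]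
    rw [hdet]
    exact isUnit_iff_ne_zero.mpr hΘ4
  have : (Qᵀ * Q).rank = 3 := by
    rw [Matrix.rank_of_isUnit _ hunit]
    simp
  omega
end
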